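/- Let Ω ⊆ ℝⁿ be open and μ a locally finite signed Radon measure on Ω satisfying |μ(U)| ≤ C·H^{n-1}(∂U) for every smooth bounded open set U ⊂⊂ Ω. Then the total variation ‖μ‖ is absolutely continuous with respect to H^{n-1}: H^{n-1}(A) = 0 implies ‖μ‖(A) = 0 for every Borel set A ⊆ Ω. -/

import Mathlib

open MeasureTheory Topology Filter Set Metric
open scoped ENNReal NNReal RealInnerProductSpace

noncomputable section

abbrev Eucl (n : ℕ) := EuclideanSpace ℝ (Fin n)

namespace BVPaper

variable {n : ℕ}

/-- Integral of a function against a signed measure. -/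
def sInt (φ : Eucl n → ℝ) (μ : SignedMeasure (Eucl n)) : ℝ :=
  (∫ x, φ x ∂μ.toJordanDecomposition.posPart) - ∫ x, φ x ∂μ.toJordanDecomposition.negPart

/-- `φ` is a smooth test function compactly supported in `Ω`. -/
def IsTest (Ω : Set (Eucl n)) (φ : Eucl n → ℝ) : Prop :=
  ContDiff ℝ (⊤ : ℕ∞) φ ∧ HasCompactSupport φ ∧ tsupport φ ⊆ Ω

/-- `Du` is the distributional gradient of `u` on the open set `Ω`. -/
def IsDistGrad (Ω : Set (Eucl n)) (u : Eucl n → ℝ) (Du : Fin n → SignedMeasure (Eucl n)) : Prop :=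
  ∀ (i : Fin n) (φ : Eucl n → ℝ), IsTest Ω φ →
    (∫ x in Ω, u x * fderiv ℝ φ x (EuclideanSpace.single i 1)) = - sInt φ (Du i)

/-- `ν` is the (Euclidean) total variation measure of the vector measure `Du`. -/
def IsVarMeasure (Du : Fin n → SignedMeasure (Eucl n)) (ν : Measure (Eucl n)) : Prop :=
  ∀ A : Set (Eucl n), MeasurableSet A →
    ν A = ⨆ (P : ℕ → Set (Eucl n)) (_ : ∀ j, MeasurableSet (P j))
      (_ : Pairwise (Function.onFun Disjoint P)) (_ : (⋃ j, P j) = A),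
      ∑' j, ENNReal.ofReal (Real.sqrt (∑ i : Fin n, ((Du i) (P j))^2))

/-- The total-variation norm `‖Du‖(Ω)`, as an infimum over representations. -/
def varNorm (Ω : Set (Eucl n)) (u : Eucl n → ℝ) : ℝ≥0∞ :=
  ⨅ (Du : Fin n → SignedMeasure (Eucl n)) (ν : Measure (Eucl n))
    (_ : IsDistGrad Ω u Du) (_ : IsVarMeasure Du ν), ν Ω

/-- `U` is a bounded open set with smooth boundary. -/
def SmoothBoundedOpen (U : Set (Eucl n)) : Prop :=
  IsOpen U ∧ Bornology.IsBounded U ∧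
    ∀ x ∈ frontier U, ∃ f : Eucl n → ℝ, ContDiff ℝ (⊤ : ℕ∞) f ∧ f x = 0 ∧
      fderiv ℝ f x ≠ 0 ∧ ∃ ε > 0, ∀ y ∈ Metric.ball x ε, (y ∈ U ↔ f y < 0)

/-- The value `μ(A)` of the signed measure `μ = μp - μn`. -/
def measVal (μp μn : Measure (Eucl n)) (A : Set (Eucl n)) : ℝ :=
  (μp A).toReal - (μn A).toReal

/-- The integral `∫ g dμ` against the signed measure `μ = μp - μn`. -/
def muInt (μp μn : Measure (Eucl n)) (g : Eucl n → ℝ) : ℝ :=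
  (∫ x, g x ∂μp) - ∫ x, g x ∂μn

/-- `ρ` is a measure on `Ω` which is locally finite in `Ω`. -/
def LocFinOn (Ω : Set (Eucl n)) (ρ : Measure (Eucl n)) : Prop :=
  ρ Ωᶜ = 0 ∧ ∀ x ∈ Ω, ∃ s ∈ 𝓝 x, ρ s ≠ ⊤

/-- `ustar` is the precise representative of `u` on `Ω` (defined `H^{n-1}`-a.e.). -/
def IsPreciseRepOn (Ω : Set (Eucl n)) (u ustar : Eucl n → ℝ) : Prop :=
  ∀ᵐ x ∂((μH[((n : ℝ) - 1)] : Measure (Eucl n)).restrict Ω),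
    Tendsto (fun r : ℝ =>
        (∫ y in Metric.ball x r ∩ Ω, u y) / (volume (Metric.ball x r ∩ Ω)).toReal)
      (𝓝[>] 0) (𝓝 (ustar x))

/-- `u ∈ BV_c^∞(Ω)` with gradient data `Du`, `ν`. -/
def IsBVcInf (Ω : Set (Eucl n)) (u : Eucl n → ℝ)
    (Du : Fin n → SignedMeasure (Eucl n)) (ν : Measure (Eucl n)) : Prop :=
  (∃ M, ∀ x, |u x| ≤ M) ∧ HasCompactSupport u ∧ tsupport u ⊆ Ω ∧ IntegrableOn u Ω ∧
    IsDistGrad Ω u Du ∧ IsVarMeasure Du ν ∧ ν Ω ≠ ⊤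

/-- The space `BV_{n/(n-1)}(ℝⁿ)`. -/
def BVnn1 (n : ℕ) : Set (Eucl n → ℝ) :=
  {u | AEStronglyMeasurable u volume ∧
    eLpNorm u ((n : ℝ≥0∞) / ((n : ℝ≥0∞) - 1)) volume ≠ ⊤ ∧
    ∃ Du ν, IsDistGrad Set.univ u Du ∧ IsVarMeasure Du ν ∧ ν Set.univ ≠ ⊤}

/-- The space `BV(ℝⁿ)`. -/
def BVfull (n : ℕ) : Set (Eucl n → ℝ) :=
  {u | Integrable u volume ∧
    ∃ Du ν, IsDistGrad Set.univ u Du ∧ IsVarMeasure Du ν ∧ ν Set.univ ≠ ⊤}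

/-- A functional on the function class `X` is linear. -/
def SubLinear (X : Set (Eucl n → ℝ)) (T : {u // u ∈ X} → ℝ) : Prop :=
  ∀ (u v w : {u // u ∈ X}) (a b : ℝ),
    (w : Eucl n → ℝ) = a • (u : Eucl n → ℝ) + b • (v : Eucl n → ℝ) →
      T w = a * T u + b * T v

/-- The operator norm of a functional on `X` w.r.t. the seminorm `p`. -/
def subDualNorm (X : Set (Eucl n → ℝ)) (p : (Eucl n → ℝ) → ℝ≥0∞)
    (T : {u // u ∈ X} → ℝ) : ℝ≥0∞ :=
  ⨆ u : {u // u ∈ X}, ENNReal.ofReal |T u| / p (u : Eucl n → ℝ)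


/-- A functional on distributions that is linear on test functions. -/
def TestLinear (T : (Eucl n → ℝ) → ℝ) : Prop :=
  ∀ (φ ψ : Eucl n → ℝ), IsTest Set.univ φ → IsTest Set.univ ψ → ∀ a b : ℝ,
    T (a • φ + b • ψ) = a * T φ + b * T ψ

/-- The dual norm of a distribution as a functional on `Ẇ^{1,1}(ℝⁿ)`,
computed on the dense class of test functions. -/
def distNormW11 (T : (Eucl n → ℝ) → ℝ) : ℝ≥0∞ :=
  ⨆ (φ : Eucl n → ℝ) (_ : IsTest Set.univ φ),
    ENNReal.ofReal |T φ| / ∫⁻ x, (‖gradient φ x‖₊ : ℝ≥0∞)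

/-- `T = div F` in the sense of distributions. -/
def IsDivOf (F : Eucl n → Eucl n) (T : (Eucl n → ℝ) → ℝ) : Prop :=
  ∀ φ : Eucl n → ℝ, IsTest Set.univ φ →
    T φ = - ∫ x, (inner ℝ (F x) (gradient φ x) : ℝ)

/-- `u` has zero trace on `∂Ω`. -/
def ZeroTrace (Ω : Set (Eucl n)) (u : Eucl n → ℝ) : Prop :=
  ∀ᵐ x ∂((μH[((n : ℝ) - 1)] : Measure (Eucl n)).restrict (frontier Ω)),
    Tendsto (fun r : ℝ => (∫ y in Metric.ball x r ∩ Ω, |u y|) / r ^ n)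
      (𝓝[>] 0) (𝓝 0)

/-- `Ω` has Lipschitz boundary: near each boundary point, after a rotation,
`Ω` is the open region above the graph of a Lipschitz function. -/
def LipschitzBoundary (Ω : Set (Eucl n)) : Prop :=
  ∀ x ∈ frontier Ω, ∃ r > (0 : ℝ), ∃ v : Eucl n, ‖v‖ = 1 ∧
    ∃ (g : Eucl n → ℝ) (L : ℝ≥0), LipschitzWith L g ∧
      Ω ∩ Metric.ball x r =
        {y ∈ Metric.ball x r | g (y - (inner ℝ y v : ℝ) • v) < (inner ℝ y v : ℝ)}

/-- The space `BV_0(Ω)` of `BV(Ω)` functions with zero trace. -/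
def BV0set (Ω : Set (Eucl n)) : Set (Eucl n → ℝ) :=
  {u | IntegrableOn u Ω ∧ ZeroTrace Ω u ∧
    ∃ Du ν, IsDistGrad Ω u Du ∧ IsVarMeasure Du ν ∧ ν Ω ≠ ⊤}

end BVPaper

open BVPaper

/-!
Near a point of `Ω` both `μp` and `μn` are finite. Applying the hypothesis to the balls `B(y, ρ)`
and letting `ρ ↓ r` gives `μp(B̄(y, r)) ≤ μn(B̄(y, r)) + c r^(n-1)` with `c = C H^(n-1)(S^(n-1))`,
which is finite because the unit sphere is a Lipschitz image of the faces of a cube. Since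
`μp ⟂ μn`, Besicovitch differentiation gives `μn(B̄(y, r)) ≤ μp(B̄(y, r)) / 2` for small `r` at
`μp`-a.e. `y`, so `μp(B̄(y, r)) ≤ 2 c r^(n-1)` there. A measure whose upper `d`-density is bounded
on a set `D` is dominated on `D` by a multiple of `H^d`; hence `μp A = 0`, and `μn A = 0` by
symmetry.
-/

open scoped Pointwise

section DensityBounds

variable {X : Type*} [MetricSpace X] [MeasurableSpace X]

theorem measure_closure_inter_le_mul_ediam_rpow (μ : Measure X) {D : Set X} {d θ : ℝ}
    {k : ℝ≥0∞} (hk : k ≠ ∞)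
    (hD : ∀ x ∈ D, ∀ r ∈ Ioo 0 θ, μ (closedBall x r) ≤ k * ENNReal.ofReal r ^ d)
    {s : Set X} (hs : ediam s < ENNReal.ofReal θ) : μ (closure s ∩ D) ≤ k * ediam s ^ d := by
  obtain hsD | ⟨x, hxs, hxD⟩ := (closure s ∩ D).eq_empty_or_nonempty
  · simp [hsD]
  have hs_top : ediam s ≠ ∞ := ne_top_of_lt hs
  set e := (ediam s).toReal
  have he : e < θ := ENNReal.toReal_lt_of_lt_ofReal hs
  have hlim : Tendsto (fun r => k * ENNReal.ofReal r ^ d) (𝓝[>] e) (𝓝 (k * ediam s ^ d)) := by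
    rw [← ENNReal.ofReal_toReal hs_top]
    refine ENNReal.Tendsto.const_mul ?_ (Or.inr hk)
    exact ((ENNReal.continuous_rpow_const.comp ENNReal.continuous_ofReal).tendsto e).mono_left
      nhdsWithin_le_nhds
  refine ge_of_tendsto hlim ?_
  filter_upwards [Ioo_mem_nhdsGT he] with r hr
  have hr0 : 0 < r := ENNReal.toReal_nonneg.trans_lt hr.1
  refine (measure_mono fun y hy => ?_).trans (hD x hxD r ⟨hr0, hr.2⟩)
  rw [mem_closedBall, ← edist_le_ofReal hr0.le]
  calc edist y x ≤ ediam (closure s) := edist_le_ediam_of_mem hy.1 hxs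
    _ = ENNReal.ofReal e := by rw [Metric.ediam_closure, ENNReal.ofReal_toReal hs_top]
    _ ≤ ENNReal.ofReal r := ENNReal.ofReal_le_ofReal hr.1.le

theorem measure_eq_zero_of_measure_closedBall_le_of_hausdorffMeasure_eq_zero [BorelSpace X]
    (μ : Measure X) {D : Set X} {d θ : ℝ} {k : ℝ≥0∞} (hk : k ≠ ∞) (hθ : 0 < θ)
    (hD : ∀ x ∈ D, ∀ r ∈ Ioo 0 θ, μ (closedBall x r) ≤ k * ENNReal.ofReal r ^ d)
    (hDH : μH[d] D = 0) : μ D = 0 := by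
  have hle : k⁻¹ • μ.restrict D ≤ μH[d] := by
    refine Measure.le_hausdorffMeasure d _ (ENNReal.ofReal (θ / 2)) (by simpa using hθ)
      fun s hs => ?_
    have hsθ : ediam s < ENNReal.ofReal θ :=
      hs.trans_lt (ENNReal.ofReal_lt_ofReal_iff hθ |>.2 (half_lt_self hθ))
    -- `D` need not be measurable: pass to the closed set `closure s`, which has the same diameter
    calc (k⁻¹ • μ.restrict D) s ≤ (k⁻¹ • μ.restrict D) (closure s) := measure_mono subset_closure
      _ = μ (closure s ∩ D) / k := by
        rw [Measure.smul_apply, Measure.restrict_apply isClosed_closure.measurableSet,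
          smul_eq_mul, ENNReal.div_eq_inv_mul]
      _ ≤ ediam s ^ d := ENNReal.div_le_of_le_mul
        ((measure_closure_inter_le_mul_ediam_rpow μ hk hD hsθ).trans_eq (mul_comm _ _))
  have h0 := (hle D).trans_eq hDH
  rwa [Measure.smul_apply, Measure.restrict_apply_self, smul_eq_mul, nonpos_iff_eq_zero,
    mul_eq_zero, or_iff_right (ENNReal.inv_ne_zero.2 hk)] at h0

theorem measure_eq_zero_of_eventually_measure_closedBall_le_of_hausdorffMeasure_eq_zero
    [BorelSpace X] (μ : Measure X) {D : Set X} {d : ℝ} {k : ℝ≥0∞} (hk : k ≠ ∞)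
    (hD : ∀ x ∈ D, ∀ᶠ r in 𝓝[>] 0, μ (closedBall x r) ≤ k * ENNReal.ofReal r ^ d)
    (hDH : μH[d] D = 0) : μ D = 0 := by
  set Dj : ℕ → Set X := fun j =>
    {x ∈ D | ∀ r ∈ Ioo 0 (1 / (j + 1 : ℝ)), μ (closedBall x r) ≤ k * ENNReal.ofReal r ^ d}
  have hcover : D ⊆ ⋃ j, Dj j := by
    intro x hx
    obtain ⟨θ, hθ, hθD⟩ := mem_nhdsGT_iff_exists_Ioo_subset.1 (hD x hx)
    obtain ⟨j, hj⟩ := exists_nat_one_div_lt (mem_Ioi.1 hθ)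
    exact mem_iUnion.2 ⟨j, hx, fun r hr => hθD ⟨hr.1, hr.2.trans hj⟩⟩
  refine measure_mono_null hcover (measure_iUnion_null fun j => ?_)
  exact measure_eq_zero_of_measure_closedBall_le_of_hausdorffMeasure_eq_zero μ hk
    Nat.one_div_pos_of_nat (fun x hx => hx.2) (measure_mono_null (sep_subset _ _) hDH)

theorem measure_closedBall_le_add_of_measure_ball_le_add [OpensMeasurableSpace X]
    {μ ν : Measure X} {x : X}
    {r θ d : ℝ} {c : ℝ≥0∞} (hc : c ≠ ∞) (hrθ : r < θ) (hν : ν (ball x θ) ≠ ∞)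
    (h : ∀ ρ ∈ Ioo r θ, μ (ball x ρ) ≤ ν (ball x ρ) + c * ENNReal.ofReal ρ ^ d) :
    μ (closedBall x r) ≤ ν (closedBall x r) + c * ENNReal.ofReal r ^ d := by
  have hν_lim : Tendsto (fun ρ => ν (ball x ρ)) (𝓝[>] r) (𝓝 (ν (closedBall x r))) := by
    rw [← biInter_gt_ball x r]
    exact tendsto_measure_biInter_gt (fun _ _ => measurableSet_ball.nullMeasurableSet)
      (fun _ _ _ hij => ball_subset_ball hij) ⟨θ, hrθ, hν⟩
  have hpow_lim : Tendsto (fun ρ => c * ENNReal.ofReal ρ ^ d) (𝓝[>] r)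
      (𝓝 (c * ENNReal.ofReal r ^ d)) :=
    ENNReal.Tendsto.const_mul (((ENNReal.continuous_rpow_const.comp
      ENNReal.continuous_ofReal).tendsto r).mono_left nhdsWithin_le_nhds) (Or.inr hc)
  refine ge_of_tendsto (hν_lim.add hpow_lim) ?_
  filter_upwards [Ioo_mem_nhdsGT hrθ] with ρ hρ
  exact (measure_mono (closedBall_subset_ball hρ.1)).trans (h ρ hρ)

theorem measure_eq_zero_of_measure_closedBall_le_add_of_mutuallySingular
    [BorelSpace X] [SecondCountableTopology X] [ProperSpace X] [HasBesicovitchCovering X]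
    {μ ν : Measure X} [IsLocallyFiniteMeasure μ] [IsLocallyFiniteMeasure ν] (hμν : μ ⟂ₘ ν)
    {D : Set X} {d : ℝ} {c : ℝ≥0∞} (hc : c ≠ ∞)
    (hD : ∀ x ∈ D, ∀ᶠ r in 𝓝[>] 0,
      μ (closedBall x r) ≤ ν (closedBall x r) + c * ENNReal.ofReal r ^ d)
    (hDH : μH[d] D = 0) : μ D = 0 := by
  set G := {x | ∀ᶠ r in 𝓝[>] 0, ν (closedBall x r) ≤ 2⁻¹ * μ (closedBall x r)}
  have hG : ∀ᵐ x ∂μ, x ∈ G := by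
    filter_upwards [Besicovitch.ae_tendsto_rnDeriv ν μ, hμν.symm.rnDeriv_ae_eq_zero]
      with x hx hx0
    rw [hx0, Pi.zero_apply] at hx
    filter_upwards [hx.eventually (gt_mem_nhds (by norm_num : (0 : ℝ≥0∞) < 2⁻¹))] with r hr
    exact (ENNReal.div_le_iff_le_mul (Or.inr (by norm_num)) (Or.inr (by norm_num))).1 hr.le
  have hDG : μ (D ∩ G) = 0 := by
    refine measure_eq_zero_of_eventually_measure_closedBall_le_of_hausdorffMeasure_eq_zero μ
      (k := 2 * c) (by finiteness) (fun x hx => ?_) (measure_mono_null inter_subset_left hDH)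
    filter_upwards [hD x hx.1, hx.2] with r hle hlt
    set a := μ (closedBall x r)
    set b := c * ENNReal.ofReal r ^ d
    have hab : a + a ≤ a + 2 * b :=
      calc a + a = 2 * a := (two_mul a).symm
        _ ≤ 2 * (2⁻¹ * a + b) := by gcongr; exact hle.trans (by gcongr)
        _ = a + 2 * b := by
          rw [mul_add, ← mul_assoc, ENNReal.mul_inv_cancel two_ne_zero ENNReal.ofNat_ne_top,
            one_mul]
    rw [mul_assoc]
    exact ENNReal.le_of_add_le_add_left measure_closedBall_lt_top.ne hab
  exact measure_mono_null (fun x hx => by by_cases hxG : x ∈ G <;> simp_all)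
    (measure_union_null hDG (ae_iff.1 hG))

end DensityBounds

section NormedSpace

variable {E : Type*} [NormedAddCommGroup E] [NormedSpace ℝ E]

theorem hausdorffMeasure_sphere [MeasurableSpace E] [BorelSpace E] {d : ℝ} (hd : 0 ≤ d)
    (x : E) {r : ℝ} (hr : 0 < r) :
    μH[d] (sphere x r) = ENNReal.ofReal r ^ d * μH[d] (sphere (0 : E) 1) := by
  have hsph : sphere x r = (IsometryEquiv.addLeft x) '' (r • sphere (0 : E) 1) := by
    rw [smul_sphere' hr.ne', smul_zero, Real.norm_of_nonneg hr.le, mul_one]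
    ext y; simp [mem_sphere_iff_norm, sub_eq_neg_add]
  rw [hsph, IsometryEquiv.hausdorffMeasure_image, Measure.hausdorffMeasure_smul₀ hd hr.ne',
    ENNReal.smul_def, ENNReal.coe_rpow_of_nonneg _ hd, smul_eq_mul, ← enorm_eq_nnnorm,
    Real.enorm_eq_ofReal hr.le]

theorem lipschitzOnWith_normalize :
    LipschitzOnWith 2 NormedSpace.normalize {x : E | 1 ≤ ‖x‖} := by
  refine LipschitzOnWith.of_dist_le_mul fun x (hx : 1 ≤ ‖x‖) y (hy : 1 ≤ ‖y‖) => ?_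
  have hx0 : 0 < ‖x‖ := one_pos.trans_le hx
  have hy0 : 0 < ‖y‖ := one_pos.trans_le hy
  have hfirst : ‖‖x‖⁻¹ • (x - y)‖ ≤ ‖x - y‖ := by
    rw [norm_smul, norm_inv, norm_norm]
    exact mul_le_of_le_one_left (norm_nonneg _) (inv_le_one_of_one_le₀ hx)
  have hsecond : ‖(‖x‖⁻¹ - ‖y‖⁻¹) • y‖ ≤ ‖x - y‖ := by
    rw [norm_smul, inv_sub_inv hx0.ne' hy0.ne', norm_div, norm_mul, norm_norm, norm_norm,
      div_mul_eq_mul_div, mul_div_mul_right _ _ hy0.ne', Real.norm_eq_abs, abs_sub_comm]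
    exact (div_le_self (abs_nonneg _) hx).trans (abs_norm_sub_norm_le x y)
  calc dist (NormedSpace.normalize x) (NormedSpace.normalize y)
      = ‖‖x‖⁻¹ • (x - y) + (‖x‖⁻¹ - ‖y‖⁻¹) • y‖ := by
        rw [dist_eq_norm, NormedSpace.normalize, NormedSpace.normalize, smul_sub, sub_smul]
        abel_nf
    _ ≤ (2 : ℝ≥0) * dist x y := by
      rw [dist_eq_norm]
      push_cast
      linarith [norm_add_le (‖x‖⁻¹ • (x - y)) ((‖x‖⁻¹ - ‖y‖⁻¹) • y)]

end NormedSpace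

section UnitSphere

def unitCube (m : ℕ) : Set (Eucl m) := {y | ∀ j, |y j| ≤ 1}

theorem isCompact_unitCube (m : ℕ) : IsCompact (unitCube m) := by
  have := (EuclideanSpace.equiv (Fin m) ℝ).toHomeomorph.isCompact_preimage.2
    (isCompact_univ_pi fun _ : Fin m => isCompact_Icc (a := (-1 : ℝ)) (b := 1))
  convert this using 1
  ext y; simp [unitCube, abs_le, forall_and, Pi.le_def]

def insertCoord {m : ℕ} (i : Fin (m + 1)) (σ : ℝ) (y : Eucl m) : Eucl (m + 1) :=
  WithLp.toLp 2 (i.insertNth σ (WithLp.ofLp y))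

theorem isometry_insertCoord {m : ℕ} (i : Fin (m + 1)) (σ : ℝ) :
    Isometry (insertCoord i σ) := by
  refine Isometry.of_dist_eq fun y y' => ?_
  simp only [EuclideanSpace.dist_eq, Fin.sum_univ_succAbove _ i, insertCoord,
    Fin.insertNth_apply_same, Fin.insertNth_apply_succAbove, dist_self]
  simp

theorem exists_normalize_insertCoord_eq {m : ℕ} {u : Eucl (m + 1)} (hu : ‖u‖ = 1) :
    ∃ i, ∃ σ ∈ ({-1, 1} : Set ℝ), ∃ y ∈ unitCube m,
      NormedSpace.normalize (insertCoord i σ y) = u := by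
  obtain ⟨i, hi⟩ := Finite.exists_max fun j => |u j|
  set a := |u i|
  have ha : 0 < a := by
    by_contra! ha
    have hu0 : u = 0 := by
      ext j; simpa using (hi j).trans ha
    simp [hu0] at hu
  set x := a⁻¹ • u
  have hx : ∀ j, |x j| = a⁻¹ * |u j| := fun j => by
    simp [x, abs_mul, abs_of_pos ha]
  refine ⟨i, x i, ?_, WithLp.toLp 2 (i.removeNth (WithLp.ofLp x)), fun j => ?_, ?_⟩
  · have : |x i| = 1 := by rw [hx, inv_mul_cancel₀ ha.ne']
    rcases abs_eq zero_le_one |>.1 this with h | h <;> simp [h]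
  · simp only [Fin.removeNth, hx]
    exact inv_mul_le_one_of_le₀ (hi _) ha.le
  · rw [insertCoord, WithLp.ofLp_toLp, Fin.insertNth_self_removeNth, WithLp.toLp_ofLp,
      NormedSpace.normalize_smul_of_pos (inv_pos.2 ha),
      NormedSpace.normalize_eq_self_of_norm_eq_one hu]

theorem hausdorffMeasure_unitSphere_ne_top {n : ℕ} (hn : n ≠ 0) :
    μH[(n : ℝ) - 1] (sphere (0 : Eucl n) 1) ≠ ∞ := by
  obtain ⟨m, rfl⟩ := Nat.exists_eq_succ_of_ne_zero hn
  rw [Nat.cast_succ, add_sub_cancel_right, ← lt_top_iff_ne_top]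
  set faces := (univ : Set (Fin (m + 1))) ×ˢ ({-1, 1} : Set ℝ)
  have hcover : sphere (0 : Eucl (m + 1)) 1 ⊆
      ⋃ p ∈ faces, (NormedSpace.normalize ∘ insertCoord p.1 p.2) '' unitCube m := by
    intro u hu
    obtain ⟨i, σ, hσ, y, hy, rfl⟩ :=
      exists_normalize_insertCoord_eq (mem_sphere_zero_iff_norm.1 hu)
    exact mem_biUnion (x := (i, σ)) (mem_prod.2 ⟨mem_univ i, hσ⟩) (mem_image_of_mem _ hy)
  refine (measure_mono hcover).trans_lt
    (measure_biUnion_lt_top (finite_univ.prod (toFinite _)) fun p hp => ?_)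
  have hmaps : MapsTo (insertCoord p.1 p.2) (unitCube m) {x | 1 ≤ ‖x‖} := fun y _ => by
    have hσ : |p.2| = 1 := by
      rcases (mem_prod.1 hp).2 with h | h <;> rw [h] <;> norm_num
    simpa [insertCoord, hσ] using PiLp.norm_apply_le (insertCoord p.1 p.2 y) p.1
  have hlip := lipschitzOnWith_normalize.comp
    (isometry_insertCoord p.1 p.2).lipschitz.lipschitzOnWith hmaps
  exact (hlip.hausdorffMeasure_image_le (Nat.cast_nonneg m)).trans_lt
    (ENNReal.mul_lt_top (ENNReal.rpow_lt_top_of_nonneg (Nat.cast_nonneg m) ENNReal.coe_ne_top)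
      (isCompact_unitCube m).measure_lt_top)

end UnitSphere

theorem hausdorffMeasure_eq_top_of_neg {X : Type*} [EMetricSpace X] [MeasurableSpace X]
    [BorelSpace X] {d : ℝ} (hd : d < 0) {s : Set X} (hs : s.Nonempty) : μH[d] s = ∞ := by
  obtain ⟨x, hx⟩ := hs
  have hx_top : μH[d] {x} = ∞ :=
    (Measure.hausdorffMeasure_zero_or_top hd {x}).resolve_left (by simp)
  exact top_le_iff.1 (hx_top ▸ measure_mono (singleton_subset_iff.2 hx))

section BoundaryEstimate

variable {n : ℕ}

theorem smoothBoundedOpen_ball (x : Eucl n) {r : ℝ} (hr : 0 < r) :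
    SmoothBoundedOpen (ball x r) := by
  refine ⟨isOpen_ball, isBounded_ball, fun z hz => ?_⟩
  rw [frontier_ball x hr.ne', mem_sphere_iff_norm] at hz
  have hderiv : HasFDerivAt (fun y : Eucl n => ‖y - x‖ ^ 2 - r ^ 2)
      (2 • (innerSL ℝ (z - x)).comp (ContinuousLinearMap.id ℝ (Eucl n))) z :=
    (((hasFDerivAt_id z).sub_const x).norm_sq).sub_const _
  refine ⟨fun y => ‖y - x‖ ^ 2 - r ^ 2,
    ((contDiff_norm_sq ℝ).comp (contDiff_id.sub contDiff_const)).sub contDiff_const,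
    by simp [hz], fun h0 => ?_, 1, one_pos, fun y _ => ?_⟩
  · have := congrArg (fun L => L (z - x)) (hderiv.fderiv.symm.trans h0)
    simp only [smul_apply, ContinuousLinearMap.comp_apply, ContinuousLinearMap.id_apply,
      innerSL_apply_apply, real_inner_self_eq_norm_sq, hz, zero_apply] at this
    exact absurd this (by positivity)
  · rw [mem_ball, dist_eq_norm, sub_neg, sq_lt_sq₀ (norm_nonneg _) hr.le]

theorem measure_lt_top_of_locFinOn {Ω : Set (Eucl n)} {ρ : Measure (Eucl n)}
    (hρ : LocFinOn Ω ρ) {K : Set (Eucl n)} (hK : IsCompact K) (hKΩ : K ⊆ Ω) : ρ K < ∞ :=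
  hK.measure_lt_top_of_nhdsWithin fun x hx =>
    let ⟨s, hs, hsfin⟩ := hρ.2 x (hKΩ hx)
    ⟨s, mem_nhdsWithin_of_mem_nhds hs, hsfin.lt_top⟩

theorem le_add_of_abs_measVal_le {μp μn : Measure (Eucl n)} {U : Set (Eucl n)} {b : ℝ≥0∞}
    (hp : μp U ≠ ∞) (hn : μn U ≠ ∞) (h : ENNReal.ofReal |measVal μp μn U| ≤ b) :
    μp U ≤ μn U + b :=
  calc μp U = ENNReal.ofReal ((μn U).toReal + measVal μp μn U) := by
        rw [measVal, add_sub_cancel, ENNReal.ofReal_toReal hp]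
    _ ≤ ENNReal.ofReal ((μn U).toReal + |measVal μp μn U|) :=
        ENNReal.ofReal_le_ofReal (by gcongr; exact le_abs_self _)
    _ ≤ ENNReal.ofReal (μn U).toReal + ENNReal.ofReal |measVal μp μn U| := ENNReal.ofReal_add_le
    _ ≤ μn U + b := by rw [ENNReal.ofReal_toReal hn]; gcongr

theorem measure_ball_le_add_of_abs_measVal_le (hn : n ≠ 0) {Ω : Set (Eucl n)}
    {μp μn : Measure (Eucl n)} {C : ℝ}
    (hsm : ∀ U : Set (Eucl n), SmoothBoundedOpen U → closure U ⊆ Ω →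
      ENNReal.ofReal |measVal μp μn U| ≤ ENNReal.ofReal C * μH[(n : ℝ) - 1] (frontier U))
    {y : Eucl n} {ρ : ℝ} (hρ : 0 < ρ) (hyΩ : closedBall y ρ ⊆ Ω)
    (hp : μp (ball y ρ) ≠ ∞) (hn' : μn (ball y ρ) ≠ ∞) :
    μp (ball y ρ) ≤ μn (ball y ρ) +
      ENNReal.ofReal C * μH[(n : ℝ) - 1] (sphere (0 : Eucl n) 1) *
        ENNReal.ofReal ρ ^ ((n : ℝ) - 1) := by
  have hd : (0 : ℝ) ≤ n - 1 := sub_nonneg.2 (Nat.one_le_cast.2 (Nat.one_le_iff_ne_zero.2 hn))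
  have hU := hsm _ (smoothBoundedOpen_ball y hρ) ((closure_ball y hρ.ne').trans_subset hyΩ)
  rw [frontier_ball y hρ.ne', hausdorffMeasure_sphere hd y hρ, ← mul_assoc,
    mul_right_comm] at hU
  exact le_add_of_abs_measVal_le hp hn' hU

theorem measure_eq_zero_of_abs_measVal_le (hn : n ≠ 0) {Ω : Set (Eucl n)} (hΩ : IsOpen Ω)
    {μp μn : Measure (Eucl n)} (hsing : μp ⟂ₘ μn) (hlfp : LocFinOn Ω μp)
    (hlfn : LocFinOn Ω μn) {C : ℝ}
    (hsm : ∀ U : Set (Eucl n), SmoothBoundedOpen U → closure U ⊆ Ω →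
      ENNReal.ofReal |measVal μp μn U| ≤ ENNReal.ofReal C * μH[(n : ℝ) - 1] (frontier U))
    {A : Set (Eucl n)} (hAΩ : A ⊆ Ω) (hA : μH[(n : ℝ) - 1] A = 0) : μp A = 0 := by
  set c := ENNReal.ofReal C * μH[(n : ℝ) - 1] (sphere (0 : Eucl n) 1)
  have hc : c ≠ ∞ :=
    ENNReal.mul_ne_top ENNReal.ofReal_ne_top (hausdorffMeasure_unitSphere_ne_top hn)
  refine measure_null_of_locally_null A fun x₀ hx₀ => ?_
  obtain ⟨ε, hε, hεΩ⟩ := Metric.isOpen_iff.1 hΩ x₀ (hAΩ hx₀)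
  obtain ⟨δ, hδ, hδε⟩ : ∃ δ, 0 < δ ∧ 2 * δ < ε := ⟨ε / 3, by positivity, by linarith⟩
  set K := closedBall x₀ (2 * δ)
  have hKΩ : K ⊆ Ω := (closedBall_subset_ball hδε).trans hεΩ
  have hball : ∀ y ∈ ball x₀ δ, ∀ ρ ≤ δ, closedBall y ρ ⊆ K := fun y hy ρ hρ =>
    closedBall_subset_closedBall' (by linarith [mem_ball.1 hy])
  have hpK := measure_lt_top_of_locFinOn hlfp (isCompact_closedBall x₀ _) hKΩ
  have hnK := measure_lt_top_of_locFinOn hlfn (isCompact_closedBall x₀ _) hKΩ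
  have : IsFiniteMeasure (μp.restrict K) := isFiniteMeasure_restrict.2 hpK.ne
  have : IsFiniteMeasure (μn.restrict K) := isFiniteMeasure_restrict.2 hnK.ne
  have hfin : ∀ ν : Measure (Eucl n), ν K < ∞ → ∀ y ∈ ball x₀ δ, ∀ ρ ≤ δ, ν (ball y ρ) ≠ ∞ :=
    fun ν hν y hy ρ hρ =>
      ne_top_of_le_ne_top hν.ne (measure_mono (ball_subset_closedBall.trans (hball y hy ρ hρ)))
  refine ⟨A ∩ ball x₀ δ, inter_mem_nhdsWithin A (ball_mem_nhds x₀ hδ), ?_⟩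
  rw [← Measure.restrict_eq_self μp (t := K) (inter_subset_right.trans
    (ball_subset_closedBall.trans (closedBall_subset_closedBall (by linarith))))]
  refine measure_eq_zero_of_measure_closedBall_le_add_of_mutuallySingular
    (μ := μp.restrict K) (ν := μn.restrict K)
    (hsing.mono Measure.restrict_le_self Measure.restrict_le_self) hc (fun y hy => ?_)
    (measure_mono_null inter_subset_left hA)
  filter_upwards [Ioo_mem_nhdsGT hδ] with r hr
  rw [Measure.restrict_eq_self _ (hball y hy.2 r hr.2.le),
    Measure.restrict_eq_self _ (hball y hy.2 r hr.2.le)]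
  refine measure_closedBall_le_add_of_measure_ball_le_add hc hr.2 (hfin μn hnK y hy.2 δ le_rfl)
    fun ρ hρ => measure_ball_le_add_of_abs_measVal_le hn hsm (hr.1.trans hρ.1)
      ((hball y hy.2 ρ hρ.2.le).trans hKΩ) (hfin μp hpK y hy.2 ρ hρ.2.le)
      (hfin μn hnK y hy.2 ρ hρ.2.le)

end BoundaryEstimate

/-- If `|μ(U)| ≤ C·H^{n-1}(∂U)` for all smooth `U ⊂⊂ Ω`, then `‖μ‖ ≪ H^{n-1}` in `Ω`. -/
theorem statement8 (n : ℕ) (Ω : Set (Eucl n)) (hΩ : IsOpen Ω)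
    (μp μn : Measure (Eucl n)) (hsing : μp.MutuallySingular μn)
    (hlfp : LocFinOn Ω μp) (hlfn : LocFinOn Ω μn) (C : ℝ)
    (hsm : ∀ U : Set (Eucl n), SmoothBoundedOpen U → closure U ⊆ Ω →
      ENNReal.ofReal |measVal μp μn U| ≤
        ENNReal.ofReal C * μH[((n : ℝ) - 1)] (frontier U)) :
    ∀ A : Set (Eucl n), A ⊆ Ω → MeasurableSet A → μH[((n : ℝ) - 1)] A = 0 →
      μp A = 0 ∧ μn A = 0 := by
  intro A hAΩ _ hA
  rcases eq_or_ne n 0 with rfl | hn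
  · obtain rfl : A = ∅ := not_nonempty_iff_eq_empty.1 fun hne =>
      ENNReal.zero_ne_top (hA ▸ hausdorffMeasure_eq_top_of_neg (by norm_num) hne)
    simp
  refine ⟨measure_eq_zero_of_abs_measVal_le hn hΩ hsing hlfp hlfn hsm hAΩ hA,
    measure_eq_zero_of_abs_measVal_le hn hΩ hsing.symm hlfn hlfp (C := C)
      (fun U hU hUΩ => ?_) hAΩ hA⟩
  rw [measVal, abs_sub_comm]
  exact hsm U hU hUΩ
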